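/- Let I = (A,b,d) be a UTVPI integer linear system (A ∈ {0,±1}^{m×n} with at most two nonzero entries per row), and let s, t be feasible solutions with s ≥ t componentwise. Set p = max_j (s_j − t_j) and u^i = max(s − i·𝟙, t) (componentwise maximum, 𝟙 the all-ones vector) for 0 ≤ i ≤ p, so u^0 = s and u^p = t. Then the following are equivalent: (1) t is reachable from s in G(I); (2) for every 0 ≤ i ≤ p−1, u^i and u^{i+1} are feasible and u^{i+1} is reachable from u^i in G(I); (3) u^1 is feasible and reachable from u^0 in G(I). -/

import Mathlib

/-- A feasible solution of the integer linear system `(A, b, d)`: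
an integer vector with entries in `{0, …, d}` satisfying `A x ≥ b`. -/
def Feasible {m n : ℕ} (A : Matrix (Fin m) (Fin n) ℚ) (b : Fin m → ℚ) (d : ℕ)
    (x : Fin n → ℤ) : Prop :=
  (∀ j, 0 ≤ x j ∧ x j ≤ (d : ℤ)) ∧ ∀ i, b i ≤ ∑ j, A i j * (x j : ℚ)

/-- The solution graph `G(I)` of the ILS `I = (A, b, d)`: two feasible solutions
are adjacent iff their Hamming distance is `1`.  (It is realized as a graph on the
ambient space of integer vectors; infeasible vectors are isolated vertices.) -/
def solGraph {m n : ℕ} (A : Matrix (Fin m) (Fin n) ℚ) (b : Fin m → ℚ) (d : ℕ) :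
    SimpleGraph (Fin n → ℤ) where
  Adj x y := Feasible A b d x ∧ Feasible A b d y ∧ hammingDist x y = 1
  symm := by
    refine ⟨?_⟩
    rintro x y ⟨hx, hy, hxy⟩
    exact ⟨hy, hx, by rwa [hammingDist_comm]⟩
  loopless := by
    refine ⟨?_⟩
    rintro x ⟨_, _, hxx⟩
    simp [hammingDist_self] at hxx

/-- A matrix is UTVPI if all entries are in `{0, 1, -1}` and each row has at most
two nonzero entries. -/
def UTVPI {m n : ℕ} (A : Matrix (Fin m) (Fin n) ℚ) : Prop :=
  (∀ i j, A i j = 0 ∨ A i j = 1 ∨ A i j = -1) ∧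
  ∀ i, (Finset.univ.filter fun j => A i j ≠ 0).card ≤ 2

/-- A row with at most two nonzero coefficients: the row sum can be written as a
combination of two coordinates (with the second coefficient zeroed out when the
two indices coincide). -/
lemma support_pair {n : ℕ} (hn : 0 < n) (a : Fin n → ℚ)
    (h : (Finset.univ.filter fun j => a j ≠ 0).card ≤ 2) :
    ∃ j k : Fin n, ∀ x : Fin n → ℚ,
      (∑ l, a l * x l) = a j * x j + (if j = k then 0 else a k) * x k := by
  classical
  set S := Finset.univ.filter fun j => a j ≠ 0 with hS
  have hsum : ∀ x : Fin n → ℚ, (∑ l ∈ S, a l * x l) = ∑ l, a l * x l := by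
    intro x
    refine Finset.sum_filter_of_ne ?_
    intro l _ hl
    intro h0; exact hl (by rw [h0, zero_mul])
  interval_cases h' : S.card
  · -- empty support
    have hall : ∀ l, a l = 0 := by
      intro l
      by_contra hl
      have : l ∈ S := by simp [hS, hl]
      simp [Finset.card_eq_zero.mp h'] at this
    refine ⟨⟨0, hn⟩, ⟨0, hn⟩, fun x => ?_⟩
    simp [hall]
  · obtain ⟨j, hj⟩ := Finset.card_eq_one.mp h'
    refine ⟨j, j, fun x => ?_⟩
    rw [← hsum x, hj]
    simp
  · obtain ⟨j, k, hjk, hj⟩ := Finset.card_eq_two.mp h'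
    refine ⟨j, k, fun x => ?_⟩
    rw [← hsum x, hj, Finset.sum_pair hjk]
    simp [hjk]

lemma med_scalar (a c bv xj yj zj xk yk zk : ℚ)
    (ha : a = 0 ∨ a = 1 ∨ a = -1) (hc : c = 0 ∨ c = 1 ∨ c = -1)
    (hxzj : xj ≤ zj) (hxzk : xk ≤ zk)
    (hx : bv ≤ a * xj + c * xk) (hy : bv ≤ a * yj + c * yk)
    (hz : bv ≤ a * zj + c * zk) :
    bv ≤ a * max xj (min yj zj) + c * max xk (min yk zk) := by
  set mj := max xj (min yj zj) with hmj
  set mk := max xk (min yk zk) with hmk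
  have f1j : xj ≤ mj := le_max_left _ _
  have f1k : xk ≤ mk := le_max_left _ _
  have f2j : mj ≤ zj := max_le hxzj (min_le_right _ _)
  have f2k : mk ≤ zk := max_le hxzk (min_le_right _ _)
  have f3j : yj ≤ mj ∨ zj ≤ mj := by
    rcases le_total yj zj with h | h
    · exact Or.inl (le_trans (le_of_eq (min_eq_left h).symm) (le_max_right _ _))
    · exact Or.inr (le_trans (le_of_eq (min_eq_right h).symm) (le_max_right _ _))
  have f3k : yk ≤ mk ∨ zk ≤ mk := by
    rcases le_total yk zk with h | h
    · exact Or.inl (le_trans (le_of_eq (min_eq_left h).symm) (le_max_right _ _))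
    · exact Or.inr (le_trans (le_of_eq (min_eq_right h).symm) (le_max_right _ _))
  have f4j : mj ≤ xj ∨ mj ≤ yj := by
    rcases le_total yj zj with h | h
    · rw [hmj, min_eq_left h]
      rcases max_choice xj yj with h' | h' <;> rw [h']
      · exact Or.inl le_rfl
      · exact Or.inr le_rfl
    · rw [hmj, min_eq_right h]
      exact Or.inr (le_trans (max_le hxzj le_rfl) h)
  have f4k : mk ≤ xk ∨ mk ≤ yk := by
    rcases le_total yk zk with h | h
    · rw [hmk, min_eq_left h]
      rcases max_choice xk yk with h' | h' <;> rw [h']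
      · exact Or.inl le_rfl
      · exact Or.inr le_rfl
    · rw [hmk, min_eq_right h]
      exact Or.inr (le_trans (max_le hxzk le_rfl) h)
  rcases f3j with f3j | f3j <;> rcases f3k with f3k | f3k <;>
    rcases f4j with f4j | f4j <;> rcases f4k with f4k | f4k <;>
    rcases ha with rfl | rfl | rfl <;> rcases hc with rfl | rfl | rfl <;> linarith

lemma shift_scalar (a c bv i tj wj tk wk : ℚ)
    (ha : a = 0 ∨ a = 1 ∨ a = -1) (hc : c = 0 ∨ c = 1 ∨ c = -1)
    (hi : 0 ≤ i) (htwj : tj ≤ wj) (htwk : tk ≤ wk)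
    (ht : bv ≤ a * tj + c * tk) (hw : bv ≤ a * wj + c * wk) :
    bv ≤ a * max (wj - i) tj + c * max (wk - i) tk := by
  set vj := max (wj - i) tj with hvj
  set vk := max (wk - i) tk with hvk
  have g1j : tj ≤ vj := le_max_right _ _
  have g1k : tk ≤ vk := le_max_right _ _
  have g2j : wj - i ≤ vj := le_max_left _ _
  have g2k : wk - i ≤ vk := le_max_left _ _
  have g3j : vj ≤ wj := max_le (by linarith) htwj
  have g3k : vk ≤ wk := max_le (by linarith) htwk
  have g4j : vj = wj - i ∨ vj = tj := max_choice _ _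
  have g4k : vk = wk - i ∨ vk = tk := max_choice _ _
  rcases g4j with g4j | g4j <;> rcases g4k with g4k | g4k <;>
    rcases ha with rfl | rfl | rfl <;> rcases hc with rfl | rfl | rfl <;> linarith

/-- UTVPI feasible sets are closed under the componentwise median
`max x (min y z)` (for `x ≤ z`). -/
lemma feasible_median {m n : ℕ} (A : Matrix (Fin m) (Fin n) ℚ) (b : Fin m → ℚ)
    (d : ℕ) (hn : 0 < n) (hU : UTVPI A) (x y z : Fin n → ℤ)
    (hx : Feasible A b d x) (hy : Feasible A b d y) (hz : Feasible A b d z)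
    (hxz : ∀ j, x j ≤ z j) :
    Feasible A b d (fun j => max (x j) (min (y j) (z j))) := by
  constructor
  · intro j
    constructor
    · exact le_trans (hx.1 j).1 (le_max_left _ _)
    · exact max_le (hx.1 j).2 (le_trans (min_le_right _ _) (hz.1 j).2)
  · intro r
    obtain ⟨j, k, hsum⟩ := support_pair hn (A r) (hU.2 r)
    have hcast : ∀ l, ((max (x l) (min (y l) (z l)) : ℤ) : ℚ)
        = max ((x l : ℚ)) (min ((y l : ℚ)) ((z l : ℚ))) := by
      intro l; rw [Int.cast_max, Int.cast_min]
    calc b r ≤ A r j * max ((x j : ℚ)) (min ((y j : ℚ)) ((z j : ℚ)))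
            + (if j = k then 0 else A r k) *
              max ((x k : ℚ)) (min ((y k : ℚ)) ((z k : ℚ))) := by
          apply med_scalar _ _ _ _ _ _ _ _ _ (hU.1 r j)
          · split_ifs with h
            · exact Or.inl rfl
            · exact hU.1 r k
          · exact_mod_cast hxz j
          · exact_mod_cast hxz k
          · rw [← hsum fun l => (x l : ℚ)]; exact hx.2 r
          · rw [← hsum fun l => (y l : ℚ)]; exact hy.2 r
          · rw [← hsum fun l => (z l : ℚ)]; exact hz.2 r
      _ = ∑ l, A r l * ((max (x l) (min (y l) (z l)) : ℤ) : ℚ) := by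
          rw [hsum fun l => ((max (x l) (min (y l) (z l)) : ℤ) : ℚ)]
          rw [hcast j, hcast k]

/-- UTVPI feasible sets are closed under `w ↦ max (w - i) t` for feasible
`t ≤ w` and `i ≥ 0`. -/
lemma feasible_shift {m n : ℕ} (A : Matrix (Fin m) (Fin n) ℚ) (b : Fin m → ℚ)
    (d : ℕ) (hn : 0 < n) (hU : UTVPI A) (t w : Fin n → ℤ)
    (ht : Feasible A b d t) (hw : Feasible A b d w)
    (htw : ∀ j, t j ≤ w j) (i : ℤ) (hi : 0 ≤ i) :
    Feasible A b d (fun j => max (w j - i) (t j)) := by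
  constructor
  · intro j
    constructor
    · exact le_trans (ht.1 j).1 (le_max_right _ _)
    · exact max_le (by have := (hw.1 j).2; omega) (ht.1 j).2
  · intro r
    obtain ⟨j, k, hsum⟩ := support_pair hn (A r) (hU.2 r)
    have hcast : ∀ l, ((max (w l - i) (t l) : ℤ) : ℚ)
        = max ((w l : ℚ) - (i : ℚ)) ((t l : ℚ)) := by
      intro l
      rw [Int.cast_max]; push_cast; rfl
    calc b r ≤ A r j * max ((w j : ℚ) - (i : ℚ)) ((t j : ℚ))
            + (if j = k then 0 else A r k) *
              max ((w k : ℚ) - (i : ℚ)) ((t k : ℚ)) := by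
          apply shift_scalar _ _ _ _ _ _ _ _ (hU.1 r j)
          · split_ifs with h
            · exact Or.inl rfl
            · exact hU.1 r k
          · exact_mod_cast hi
          · exact_mod_cast htw j
          · exact_mod_cast htw k
          · rw [← hsum fun l => (t l : ℚ)]; exact ht.2 r
          · rw [← hsum fun l => (w l : ℚ)]; exact hw.2 r
      _ = ∑ l, A r l * ((max (w l - i) (t l) : ℤ) : ℚ) := by
          rw [hsum fun l => ((max (w l - i) (t l) : ℤ) : ℚ), hcast j, hcast k]

/-- Reachability in the solution graph is preserved by any coordinatewise map
that preserves feasibility. -/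
lemma reach_map {m n : ℕ} (A : Matrix (Fin m) (Fin n) ℚ) (b : Fin m → ℚ)
    (d : ℕ) (g : Fin n → ℤ → ℤ)
    (hfeas : ∀ x, Feasible A b d x → Feasible A b d (fun j => g j (x j)))
    {x y : Fin n → ℤ} (h : (solGraph A b d).Reachable x y) :
    (solGraph A b d).Reachable (fun j => g j (x j)) (fun j => g j (y j)) := by
  obtain ⟨wlk⟩ := h
  induction wlk with
  | nil => exact SimpleGraph.Reachable.refl _
  | @cons a c _ hadj _ ih =>
    refine SimpleGraph.Reachable.trans ?_ ih
    obtain ⟨hfa, hfc, hdist⟩ := hadj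
    have hle : hammingDist (fun j => g j (a j)) (fun j => g j (c j)) ≤ 1 := by
      calc hammingDist (fun j => g j (a j)) (fun j => g j (c j))
          ≤ hammingDist a c := hammingDist_comp_le_hammingDist g
        _ = 1 := hdist
    rcases Nat.le_one_iff_eq_zero_or_eq_one.mp hle with h0 | h1
    · rw [hammingDist_eq_zero.mp h0]
    · exact SimpleGraph.Adj.reachable ⟨hfeas a hfa, hfeas c hfc, h1⟩

theorem stmt_15 {m n : ℕ} (A : Matrix (Fin m) (Fin n) ℚ) (b : Fin m → ℚ) (d : ℕ)
    (hd : 0 < d) (hn : 0 < n) (hUTVPI : UTVPI A)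
    (s t : Fin n → ℤ) (hs : Feasible A b d s) (ht : Feasible A b d t)
    (hge : ∀ j, t j ≤ s j)  -- `s ≥ t`
    (p : ℕ)
    (hp1 : ∀ j, s j - t j ≤ (p : ℤ)) (hp2 : ∃ j, s j - t j = (p : ℤ))
    (u : ℕ → Fin n → ℤ)
    (hu : ∀ i j, u i j = max (s j - (i : ℤ)) (t j)) :
    -- (1) ↔ (2)
    ((solGraph A b d).Reachable s t ↔
      (∀ i < p, Feasible A b d (u i) ∧ Feasible A b d (u (i + 1)) ∧
        (solGraph A b d).Reachable (u i) (u (i + 1)))) ∧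
    -- (2) ↔ (3)
    ((∀ i < p, Feasible A b d (u i) ∧ Feasible A b d (u (i + 1)) ∧
        (solGraph A b d).Reachable (u i) (u (i + 1))) ↔
      (Feasible A b d (u 1) ∧ (solGraph A b d).Reachable (u 0) (u 1))) := by
  -- basic identities
  have hu0 : u 0 = s := by
    funext j; rw [hu]; have := hge j; push_cast; omega
  have hup : u p = t := by
    funext j; rw [hu]; have := hp1 j; have := hge j; omega
  -- every `u i` is feasible
  have feasU : ∀ i : ℕ, Feasible A b d (u i) := by
    intro i
    have : u i = fun j => max (s j - (i : ℤ)) (t j) := by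
      funext j; exact hu i j
    rw [this]
    exact feasible_shift A b d hn hUTVPI t s ht hs hge (i : ℤ) (by positivity)
  -- (2) ⟹ (1)
  have r21 : (∀ i < p, (solGraph A b d).Reachable (u i) (u (i + 1))) →
      (solGraph A b d).Reachable s t := by
    intro h2
    have key : ∀ q : ℕ, q ≤ p → (solGraph A b d).Reachable (u 0) (u q) := by
      intro q
      induction q with
      | zero => intro _; exact SimpleGraph.Reachable.refl _
      | succ q ih =>
        intro hq
        exact SimpleGraph.Reachable.trans (ih (by omega)) (h2 q (by omega))
    rw [← hu0, ← hup]
    exact key p le_rfl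
  -- (1) ⟹ (3)-reachability
  have r13 : (solGraph A b d).Reachable s t →
      (solGraph A b d).Reachable (u 0) (u 1) := by
    intro h1
    set g : Fin n → ℤ → ℤ := fun j a => max (max (s j - 1) (t j)) (min a (s j))
      with hg
    have hfeas : ∀ x, Feasible A b d x → Feasible A b d (fun j => g j (x j)) := by
      intro x hx
      have hu1 : Feasible A b d (fun j => max (s j - 1) (t j)) :=
        feasible_shift A b d hn hUTVPI t s ht hs hge 1 one_pos.le
      have := feasible_median A b d hn hUTVPI
        (fun j => max (s j - 1) (t j)) x s hu1 hx hs
        (fun j => by show max (s j - 1) (t j) ≤ s j; have := hge j; omega)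
      exact this
    have := reach_map A b d g hfeas h1
    have e1 : (fun j => g j (s j)) = u 0 := by
      funext j; rw [hg, hu]; have := hge j; push_cast; omega
    have e2 : (fun j => g j (t j)) = u 1 := by
      funext j; rw [hg, hu]; have := hge j; push_cast; omega
    rwa [e1, e2] at this
  -- (3)-reachability ⟹ all consecutive reachabilities
  have r32 : (solGraph A b d).Reachable (u 0) (u 1) →
      ∀ i : ℕ, (solGraph A b d).Reachable (u i) (u (i + 1)) := by
    intro h3 i
    set g : Fin n → ℤ → ℤ :=
      fun j a => max (max (t j) (min a (s j)) - (i : ℤ)) (t j) with hg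
    have hfeas : ∀ x, Feasible A b d x → Feasible A b d (fun j => g j (x j)) := by
      intro x hx
      have hmed : Feasible A b d (fun j => max (t j) (min (x j) (s j))) :=
        feasible_median A b d hn hUTVPI t x s ht hx hs hge
      have := feasible_shift A b d hn hUTVPI t
        (fun j => max (t j) (min (x j) (s j))) ht hmed
        (fun j => le_max_left _ _) (i : ℤ) (by positivity)
      exact this
    have := reach_map A b d g hfeas h3
    have e1 : (fun j => g j (u 0 j)) = u i := by
      funext j; rw [hg, hu, hu]; have := hge j; push_cast; omega
    have e2 : (fun j => g j (u 1 j)) = u (i + 1) := by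
      funext j; rw [hg, hu, hu]; have := hge j; push_cast; omega
    rwa [e1, e2] at this
  constructor
  · constructor
    · intro h1 i hi
      exact ⟨feasU i, feasU (i + 1), r32 (r13 h1) i⟩
    · intro h2
      exact r21 fun i hi => (h2 i hi).2.2
  · constructor
    · intro h2
      exact ⟨feasU 1, r13 (r21 fun i hi => (h2 i hi).2.2)⟩
    · intro h3 i hi
      exact ⟨feasU i, feasU (i + 1), r32 h3.2 i⟩
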